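/- arXiv:2009.03850 — 6 statements merged into one kernel-verified Lean document; each statement's English description precedes it below -/
import Mathlib

section
/- (Lemma 1, input observability) For every u ∈ ℝ^p and all integers τ ≥ 1 and τ̃ ≥ 1, the following equivalence holds: (C T(k, τ̃) B u = 0 for all k ∈ {1, …, N}) if and only if (C T(k, τ) B u = 0 for all k ∈ {1, …, N}). In particular, since T(k,1) = A^{k−1}, each of these conditions is equivalent to C A^{k−1} B u = 0 for all k ∈ {1, …, N}. -/
open Matrix Finset

/-- **Lemma 1 (input observability).**
For `T(k,τ) = Σ_{j=max(k−τ,0)}^{k−1} A^j`, the condition `C T(k,τ̃) B u = 0` for all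
`k ∈ {1,…,N}` holds for one lag `τ̃ ≥ 1` iff it holds for any other lag `τ ≥ 1`; in
particular (since `T(k,1) = A^(k−1)`) each is equivalent to `C A^(k−1) B u = 0` for all
`k ∈ {1,…,N}`. -/
theorem input_observability
    (n m p N : ℕ) (hN : 1 ≤ N)
    (A : Matrix (Fin n) (Fin n) ℝ) (B : Matrix (Fin n) (Fin p) ℝ)
    (C : Matrix (Fin m) (Fin n) ℝ)
    (T : ℕ → ℕ → Matrix (Fin n) (Fin n) ℝ)
    (hT : ∀ k τ, T k τ = ∑ j ∈ Finset.Ico (k - τ) k, A ^ j)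
    (u : Fin p → ℝ) (τ τ' : ℕ) (hτ : 1 ≤ τ) (hτ' : 1 ≤ τ') :
    ((∀ k ∈ Finset.Icc 1 N, (C * T k τ' * B) *ᵥ u = 0) ↔
      (∀ k ∈ Finset.Icc 1 N, (C * T k τ * B) *ᵥ u = 0)) ∧
    ((∀ k ∈ Finset.Icc 1 N, (C * T k τ * B) *ᵥ u = 0) ↔
      (∀ k ∈ Finset.Icc 1 N, (C * A ^ (k - 1) * B) *ᵥ u = 0)) := by
  have expand : ∀ (k σ : ℕ), (C * T k σ * B) *ᵥ u =
      ∑ j ∈ Finset.Ico (k - σ) k, (C * A ^ j * B) *ᵥ u := by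
    intro k σ
    rw [hT]
    rw [Matrix.mul_sum, Matrix.sum_mul]
    ext i
    simp [Matrix.mulVec, dotProduct, Matrix.sum_apply, Finset.sum_mul]
    exact Finset.sum_comm
  have key : ∀ σ : ℕ, 1 ≤ σ →
      ((∀ k ∈ Finset.Icc 1 N, (C * T k σ * B) *ᵥ u = 0) ↔
        (∀ k ∈ Finset.Icc 1 N, (C * A ^ (k - 1) * B) *ᵥ u = 0)) := by
    intro σ hσ
    constructor
    · intro h k hk
      induction k using Nat.strong_induction_on with
      | _ k ih =>
        simp only [Finset.mem_Icc] at hk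
        obtain ⟨hk1, hkN⟩ := hk
        have hmem : k - 1 ∈ Finset.Ico (k - σ) k := by
          rw [Finset.mem_Ico]
          omega
        have hsum := h k (Finset.mem_Icc.mpr ⟨hk1, hkN⟩)
        rw [expand, ← Finset.add_sum_erase _ _ hmem] at hsum
        have hrest : ∑ j ∈ (Finset.Ico (k - σ) k).erase (k - 1),
            (C * A ^ j * B) *ᵥ u = 0 := by
          apply Finset.sum_eq_zero
          intro j hj
          rw [Finset.mem_erase, Finset.mem_Ico] at hj
          have hj1 : j + 1 < k := by omega
          have := ih (j + 1) (by omega) (Finset.mem_Icc.mpr ⟨by omega, by omega⟩)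
          simpa using this
        rw [hrest, add_zero] at hsum
        exact hsum
    · intro h k hk
      simp only [Finset.mem_Icc] at hk
      rw [expand]
      apply Finset.sum_eq_zero
      intro j hj
      rw [Finset.mem_Ico] at hj
      have := h (j + 1) (Finset.mem_Icc.mpr ⟨by omega, by omega⟩)
      simpa using this
  exact ⟨(key τ' hτ').trans (key τ hτ).symm, key τ hτ⟩
end

section
/- (Theorem 2, existence of fully private input directions) Let L = N − k* ≥ 1. There exists a nonzero vector u ∈ ℝ^p and an integer τ with 1 ≤ τ ≤ L such that uᵀ𝒮(τ)u = 0 if and only if the stacked matrix 𝒪 ∈ ℝ^{(L·m)×p}, whose k-th block row (for k = 0, 1, …, L−1) is C A^k B, has rank strictly less than p. -/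
/-!
Each summand of `𝒮(τ)` is a Gram form `Mᵀ Σe⁻¹ M` with `Σe⁻¹` positive definite, so
`uᵀ 𝒮(τ) u = 0` exactly when `C Ã(k, τ) B u = 0` for every `k`. For `τ ≥ 1`,
`Ã(k* + 1 + j, τ) = A^j + A^(j-1) + ⋯` is a unitriangular combination of `A^0, …, A^j`, so these
conditions amount to `C A^j B u = 0` for all `j < L`, i.e. `𝒪 u = 0`, whatever `τ` is.
A nonzero vector in the kernel of `𝒪` exists iff `rank 𝒪 < p`.
-/

open Matrix Finset

namespace Matrix

variable {ι κ m n R : Type*} [Fintype n]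

theorem dotProduct_transpose_mul_mul_mulVec [Fintype m] [CommSemiring R] (M : Matrix m n R)
    (Q : Matrix m m R) (u : n → R) :
    u ⬝ᵥ ((Mᵀ * Q * M) *ᵥ u) = (M *ᵥ u) ⬝ᵥ (Q *ᵥ (M *ᵥ u)) := by
  rw [← mulVec_mulVec, ← mulVec_mulVec, dotProduct_mulVec, vecMul_transpose]

section Ordered

variable [Fintype m] [CommRing R] [PartialOrder R] [StarRing R] [TrivialStar R]

theorem PosDef.dotProduct_mulVec_eq_zero_iff {Q : Matrix m m R} (hQ : Q.PosDef) {x : m → R} :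
    x ⬝ᵥ (Q *ᵥ x) = 0 ↔ x = 0 := by
  refine ⟨fun h => ?_, fun h => by simp [h]⟩
  by_contra hx
  simpa [h] using hQ.dotProduct_mulVec_pos hx

theorem PosDef.dotProduct_sum_transpose_mul_mul_mulVec_eq_zero_iff [IsOrderedRing R] {Q : Matrix m m R}
    (hQ : Q.PosDef) (s : Finset ι) (M : ι → Matrix m n R) (u : n → R) :
    u ⬝ᵥ ((∑ i ∈ s, (M i)ᵀ * Q * M i) *ᵥ u) = 0 ↔ ∀ i ∈ s, M i *ᵥ u = 0 := by
  have hnonneg : ∀ i ∈ s, 0 ≤ (M i *ᵥ u) ⬝ᵥ (Q *ᵥ (M i *ᵥ u)) := fun i _ => by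
    simpa using hQ.posSemidef.dotProduct_mulVec_nonneg (M i *ᵥ u)
  simp only [sum_mulVec, dotProduct_sum, dotProduct_transpose_mul_mul_mulVec,
    sum_eq_zero_iff_of_nonneg hnonneg, hQ.dotProduct_mulVec_eq_zero_iff]

end Ordered

theorem rank_lt_card_width_iff_exists_mulVec_eq_zero [Field R] (M : Matrix m n R) :
    M.rank < Fintype.card n ↔ ∃ v ≠ 0, M *ᵥ v = 0 := by
  have hdim := LinearMap.finrank_range_add_finrank_ker M.mulVecLin
  rw [Module.finrank_fintype_fun_eq_card] at hdim
  rw [rank, ← hdim, Nat.lt_add_right_iff_pos, Nat.pos_iff_ne_zero, Ne,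
    Submodule.finrank_eq_zero, ← Ne, Submodule.ne_bot_iff]
  simp only [LinearMap.mem_ker, mulVecLin_apply]
  exact exists_congr fun v => and_comm

theorem mulVec_eq_zero_iff_forall_blocks [NonUnitalNonAssocSemiring R]
    {O : Matrix (κ × m) n R} {M : κ → Matrix m n R} (hO : ∀ k i j, O (k, i) j = M k i j)
    (u : n → R) : O *ᵥ u = 0 ↔ ∀ k, M k *ᵥ u = 0 := by
  have hblock : ∀ k i, (O *ᵥ u) (k, i) = (M k *ᵥ u) i := fun k i => by
    simp only [mulVec, dotProduct, hO]
  simp only [funext_iff, Prod.forall, hblock, Pi.zero_apply]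

end Matrix

theorem Finset.sum_Icc_min_eq_sum_range {M : Type*} [AddCommMonoid M] (f : ℕ → M)
    {τ : ℕ} (hτ : 1 ≤ τ) (a j : ℕ) :
    ∑ l ∈ Icc a (min (a + τ - 1) (a + j)), f (a + j - l) =
      ∑ i ∈ range (min τ (j + 1)), f (j - i) := by
  have hmin : min (a + τ - 1) (a + j) + 1 = a + min τ (j + 1) := by omega
  rw [← Ico_add_one_right_eq_Icc, sum_Ico_eq_sum_range, hmin, Nat.add_sub_cancel_left]
  simp only [Nat.add_sub_add_left]

theorem forall_lt_sum_range_min_eq_zero_iff {M : Type*} [AddCommMonoid M] (f : ℕ → M)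
    {τ : ℕ} (hτ : 1 ≤ τ) (L : ℕ) :
    (∀ j < L, ∑ i ∈ range (min τ (j + 1)), f (j - i) = 0) ↔ ∀ j < L, f j = 0 := by
  refine ⟨fun h j => ?_, fun h j hj => sum_eq_zero fun i hi => h _ ?_⟩
  · induction j using Nat.strong_induction_on with
    | _ j ih =>
      intro hj
      obtain ⟨t, ht⟩ : ∃ t, min τ (j + 1) = t + 1 := ⟨min τ (j + 1) - 1, by omega⟩
      have hlower : ∑ i ∈ range t, f (j - (i + 1)) = 0 :=
        sum_eq_zero fun i hi => ih _ (by rw [mem_range] at hi; omega) (by omega)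
      simpa [ht, sum_range_succ', hlower] using h j hj
  · rw [mem_range] at hi; omega

theorem Finset.forall_mem_Icc_add_one_iff {P : ℕ → Prop} {a b : ℕ} :
    (∀ k ∈ Icc (a + 1) b, P k) ↔ ∀ j < b - a, P (a + j + 1) := by
  refine ⟨fun h j hj => h _ (mem_Icc.2 (by omega)), fun h k hk => ?_⟩
  obtain ⟨hk₁, hk₂⟩ := mem_Icc.1 hk
  simpa [show a + (k - a - 1) + 1 = k by omega] using h (k - a - 1) (by omega)

/-- **Theorem 2 (existence of fully private input directions).**
With `L = N − k* ≥ 1`, there exist a nonzero input direction `u` and a lag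
`τ ∈ {1,…,L}` with `uᵀ𝒮(τ)u = 0` if and only if the stacked input-observability matrix
`𝒪` with block rows `C A^k B`, `k = 0,…,L−1`, has rank strictly less than `p`. -/
theorem fully_private_direction_iff_rank_deficient
    (n m p N kstar : ℕ) (hk : kstar < N)
    (A : Matrix (Fin n) (Fin n) ℝ) (B : Matrix (Fin n) (Fin p) ℝ)
    (C : Matrix (Fin m) (Fin n) ℝ)
    (σe : Matrix (Fin m) (Fin m) ℝ) (hσe : σe.PosDef)
    (Atil : ℕ → ℕ → Matrix (Fin n) (Fin n) ℝ)
    (hAtil : ∀ k τ, Atil k τ =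
      ∑ l ∈ Finset.Icc kstar (min (kstar + τ - 1) (k - 1)), A ^ (k - 1 - l))
    (S : ℕ → Matrix (Fin p) (Fin p) ℝ)
    (hS : ∀ τ, S τ = ∑ k ∈ Finset.Icc (kstar + 1) N,
      (C * Atil k τ * B)ᵀ * σe⁻¹ * (C * Atil k τ * B))
    (𝒪 : Matrix (Fin (N - kstar) × Fin m) (Fin p) ℝ)
    (h𝒪 : ∀ (k : Fin (N - kstar)) (i : Fin m) (j : Fin p),
      𝒪 (k, i) j = (C * A ^ (k : ℕ) * B) i j) :
    (∃ u : Fin p → ℝ, u ≠ 0 ∧ ∃ τ : ℕ, 1 ≤ τ ∧ τ ≤ N - kstar ∧ u ⬝ᵥ (S τ *ᵥ u) = 0) ↔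
      𝒪.rank < p := by
  have hquad : ∀ τ, 1 ≤ τ → ∀ u, u ⬝ᵥ (S τ *ᵥ u) = 0 ↔ 𝒪 *ᵥ u = 0 := by
    intro τ hτ u
    have hwindow : ∀ j, (C * Atil (kstar + j + 1) τ * B) *ᵥ u =
        ∑ i ∈ range (min τ (j + 1)), (C * A ^ (j - i) * B) *ᵥ u := fun j => by
      rw [hAtil, Nat.add_sub_cancel, Matrix.mul_sum, Matrix.sum_mul, sum_mulVec,
        sum_Icc_min_eq_sum_range (fun l => (C * A ^ l * B) *ᵥ u) hτ]
    rw [hS, hσe.inv.dotProduct_sum_transpose_mul_mul_mulVec_eq_zero_iff,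
      forall_mem_Icc_add_one_iff, mulVec_eq_zero_iff_forall_blocks h𝒪, Fin.forall_iff]
    simp only [hwindow]
    exact forall_lt_sum_range_min_eq_zero_iff (fun j => (C * A ^ j * B) *ᵥ u) hτ _
  have hrank := 𝒪.rank_lt_card_width_iff_exists_mulVec_eq_zero
  rw [Fintype.card_fin] at hrank
  rw [hrank]
  constructor
  · rintro ⟨u, hu, τ, hτ, -, h0⟩
    exact ⟨u, hu, (hquad τ hτ u).1 h0⟩
  · rintro ⟨u, hu, h0⟩
    exact ⟨u, hu, 1, le_rfl, by omega, (hquad 1 le_rfl u).2 h0⟩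
end

section
/- (Corollary, fully private directions and transmission zeros) Assume N − k* > n and let u ∈ ℝ^p be nonzero. Then C A^j B u = 0 for all integers j with 0 ≤ j ≤ N − k* − 1 if and only if there exist a complex number z₀ and a vector x⁰ ∈ ℂ^n such that (A − z₀ I) x⁰ + B u = 0 and C A^k x⁰ = 0 for all integers k with 0 ≤ k ≤ n − 1 (where A, B, C and u are regarded as complex matrices and vectors via the inclusion ℝ ↪ ℂ). In other words, u is a fully private input direction if and only if u is a zero-input direction whose corresponding zero-state direction lies in the kernel of the observability matrix. -/
open Matrix Finset

open Polynomial

/-!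
Both sides are statements about the unobservable subspace `V = ⋂ₖ ker (C Aᵏ)`, which is
`A`-invariant and, by Cayley–Hamilton, already cut out by the exponents `k < n`; as `N − k* > n`,
full privacy of `u` says exactly `B u ∈ V`. If `(A − z₀) x⁰ + B u = 0` with `x⁰ ∈ V`, then
`B u = z₀ x⁰ − A x⁰ ∈ V`. Conversely, for `z₀` outside the (finite) spectrum of `A`, the map
`z₀ − A` is injective on the finite-dimensional space `V` and hence onto it, which gives `x⁰`.
-/

theorem Submodule.map_eq_self_of_injective {K E : Type*} [DivisionRing K] [AddCommGroup E]
    [Module K E] {p : Submodule K E} [FiniteDimensional K p] {f : E →ₗ[K] E}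
    (hf : Function.Injective f) (hp : p.map f ≤ p) : p.map f = p :=
  Submodule.eq_of_le_of_finrank_eq hp (p.equivMapOfInjective f hf).finrank_eq.symm

namespace Matrix

variable {ι μ R S K : Type*} [Fintype ι] [DecidableEq ι]

section CommRing

variable [CommRing R] [CommRing S] {A : Matrix ι ι R} {C : Matrix μ ι R} {v w : ι → R}

def unobservableSubspace (A : Matrix ι ι R) (C : Matrix μ ι R) : Submodule R (ι → R) :=
  ⨅ k : ℕ, LinearMap.ker (C * A ^ k).mulVecLin

theorem mem_unobservableSubspace :
    v ∈ A.unobservableSubspace C ↔ ∀ k : ℕ, (C * A ^ k) *ᵥ v = 0 := by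
  simp [unobservableSubspace]

theorem mulVec_mem_unobservableSubspace (hv : v ∈ A.unobservableSubspace C) :
    A *ᵥ v ∈ A.unobservableSubspace C := by
  rw [mem_unobservableSubspace] at hv ⊢
  intro k
  rw [mulVec_mulVec, Matrix.mul_assoc, ← pow_succ, hv]

theorem mem_unobservableSubspace_iff_forall_lt_card [Nontrivial R] :
    v ∈ A.unobservableSubspace C ↔ ∀ k < Fintype.card ι, (C * A ^ k) *ᵥ v = 0 := by
  refine ⟨fun hv k _ ↦ mem_unobservableSubspace.mp hv k, fun hv ↦ ?_⟩
  rw [mem_unobservableSubspace]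
  intro k
  have hdeg : (X ^ k %ₘ A.charpoly).degree < Fintype.card ι := by
    simpa [charpoly_degree_eq_dim] using degree_modByMonic_lt (X ^ k) A.charpoly_monic
  rw [pow_eq_aeval_mod_charpoly, aeval_eq_sum_range, Matrix.mul_sum, sum_mulVec]
  refine Finset.sum_eq_zero fun i _ ↦ ?_
  rw [Matrix.mul_smul, smul_mulVec]
  by_cases hi : i < Fintype.card ι
  · rw [hv i hi, smul_zero]
  · rw [coeff_eq_zero_of_degree_lt (hdeg.trans_le (by exact_mod_cast not_lt.mp hi)), zero_smul]

theorem map_mem_unobservableSubspace_map_iff {f : R →+* S} (hf : Function.Injective f) :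
    f ∘ v ∈ (A.map f).unobservableSubspace (C.map f) ↔ v ∈ A.unobservableSubspace C := by
  have hmap : ∀ k : ℕ, (C.map f * A.map f ^ k) *ᵥ (f ∘ v) = f ∘ ((C * A ^ k) *ᵥ v) := by
    intro k
    ext i
    rw [Function.comp_apply, RingHom.map_mulVec, Matrix.map_mul,
      ← RingHom.mapMatrix_apply (M := A ^ k), map_pow, RingHom.mapMatrix_apply]
  simp only [mem_unobservableSubspace, hmap, funext_iff, Function.comp_apply, Pi.zero_apply,
    map_eq_zero_iff f hf]

theorem mem_unobservableSubspace_of_add_eq_zero {z : R} {x : ι → R}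
    (hx : x ∈ A.unobservableSubspace C) (h : (A - z • 1) *ᵥ x + w = 0) :
    w ∈ A.unobservableSubspace C := by
  have hw : w = z • x - A *ᵥ x := by
    rw [eq_neg_of_add_eq_zero_right h, sub_mulVec, smul_mulVec, one_mulVec, neg_sub]
  rw [hw]
  exact sub_mem (Submodule.smul_mem _ z hx) (mulVec_mem_unobservableSubspace hx)

end CommRing

section Field

variable [Field K] {A : Matrix ι ι K} {C : Matrix μ ι K} {w : ι → K}

theorem exists_add_eq_zero_of_mem_unobservableSubspace [Infinite K]
    (hw : w ∈ A.unobservableSubspace C) :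
    ∃ (z : K) (x : ι → K), (A - z • 1) *ᵥ x + w = 0 ∧ x ∈ A.unobservableSubspace C := by
  obtain ⟨z, hz⟩ := A.finite_spectrum.infinite_compl.nonempty
  have hunit : IsUnit (z • 1 - A) := by
    simpa [Algebra.algebraMap_eq_smul_one] using spectrum.notMem_iff.mp hz
  set V := A.unobservableSubspace C
  have hV : V.map (z • 1 - A).mulVecLin ≤ V := by
    rintro _ ⟨x, hx, rfl⟩
    simpa [sub_mulVec, smul_mulVec] using
      sub_mem (Submodule.smul_mem V z hx) (mulVec_mem_unobservableSubspace hx)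
  rw [← Submodule.map_eq_self_of_injective (mulVec_injective_iff_isUnit.mpr hunit) hV] at hw
  obtain ⟨x, hx, hxw⟩ := hw
  refine ⟨z, x, ?_, hx⟩
  rw [← hxw, mulVecLin_apply, ← add_mulVec, sub_add_sub_cancel', sub_self, zero_mulVec]

theorem mem_unobservableSubspace_iff_exists_add_eq_zero [Infinite K] :
    w ∈ A.unobservableSubspace C ↔
      ∃ (z : K) (x : ι → K), (A - z • 1) *ᵥ x + w = 0 ∧ x ∈ A.unobservableSubspace C :=
  ⟨exists_add_eq_zero_of_mem_unobservableSubspace,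
    fun ⟨_, _, h, hx⟩ ↦ mem_unobservableSubspace_of_add_eq_zero hx h⟩

end Field

end Matrix

theorem fully_private_iff_transmission_zero_general
    (n m p N kstar : ℕ) (hn : n < N - kstar)
    (A : Matrix (Fin n) (Fin n) ℝ) (B : Matrix (Fin n) (Fin p) ℝ)
    (C : Matrix (Fin m) (Fin n) ℝ)
    (u : Fin p → ℝ) :
    (∀ j : ℕ, j ≤ N - kstar - 1 → (C * A ^ j * B) *ᵥ u = 0) ↔
      ∃ (z₀ : ℂ) (x₀ : Fin n → ℂ),
        ((A.map (Complex.ofReal) - z₀ • 1) *ᵥ x₀ +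
            (B.map (Complex.ofReal)) *ᵥ (fun i => (u i : ℂ)) = 0) ∧
        ∀ k : ℕ, k < n → ((C.map (Complex.ofReal)) * (A.map (Complex.ofReal)) ^ k) *ᵥ x₀ = 0 := by
  have hBu : B.map Complex.ofReal *ᵥ (fun i => (u i : ℂ)) = Complex.ofRealHom ∘ (B *ᵥ u) :=
    funext fun i ↦ (RingHom.map_mulVec Complex.ofRealHom B u i).symm
  calc (∀ j : ℕ, j ≤ N - kstar - 1 → (C * A ^ j * B) *ᵥ u = 0)
      ↔ B *ᵥ u ∈ A.unobservableSubspace C := by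
        simp only [← mulVec_mulVec (N := B)]
        refine ⟨fun h ↦ ?_, fun h j _ ↦ mem_unobservableSubspace.mp h j⟩
        rw [mem_unobservableSubspace_iff_forall_lt_card, Fintype.card_fin]
        exact fun k hk ↦ h k (by omega)
    _ ↔ Complex.ofRealHom ∘ (B *ᵥ u) ∈
          (A.map Complex.ofRealHom).unobservableSubspace (C.map Complex.ofRealHom) :=
        (map_mem_unobservableSubspace_map_iff Complex.ofReal_injective).symm
    _ ↔ _ := by
        rw [← hBu, mem_unobservableSubspace_iff_exists_add_eq_zero]
        simp only [mem_unobservableSubspace_iff_forall_lt_card, Fintype.card_fin]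
        rfl

/-- **Corollary (fully private directions and transmission zeros).**
Assume `N − k* > n` and `u ≠ 0`. Then `u` is a fully private input direction
(`C A^j B u = 0` for all `0 ≤ j ≤ N − k* − 1`) if and only if there exist a complex number
`z₀` and a zero-state direction `x⁰ ∈ ℂ^n` with `(A − z₀ I) x⁰ + B u = 0` and
`C A^k x⁰ = 0` for all `0 ≤ k < n`, i.e. `u` is a zero-input direction whose zero-state
direction lies in the kernel of the observability matrix. -/
theorem fully_private_iff_transmission_zero
    (n m p N kstar : ℕ) (hk : kstar < N) (hn : n < N - kstar)
    (A : Matrix (Fin n) (Fin n) ℝ) (B : Matrix (Fin n) (Fin p) ℝ)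
    (C : Matrix (Fin m) (Fin n) ℝ)
    (u : Fin p → ℝ) (hu : u ≠ 0) :
    (∀ j : ℕ, j ≤ N - kstar - 1 → (C * A ^ j * B) *ᵥ u = 0) ↔
      ∃ (z₀ : ℂ) (x₀ : Fin n → ℂ),
        ((A.map (Complex.ofReal) - z₀ • 1) *ᵥ x₀ +
            (B.map (Complex.ofReal)) *ᵥ (fun i => (u i : ℂ)) = 0) ∧
        ∀ k : ℕ, k < n → ((C.map (Complex.ofReal)) * (A.map (Complex.ofReal)) ^ k) *ᵥ x₀ = 0 :=
  fully_private_iff_transmission_zero_general n m p N kstar hn A B C u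
end

section
/- (Theorem 3, privacy–utility trade-off) Let F = {(x,u) ∈ ℝ^n × ℝ^p : x = A x + B u and C₁ x = r} be the feasible set. Suppose (x*, u*) ∈ F minimizes J over F and (x_p, u_p) ∈ F minimizes J_p over F. Define the utility loss ε = J(x_p, u_p) − J(x*, u*) and the nominal privacy gain δ = u*ᵀ S u* − u_pᵀ S u_p. Then μ · (u*ᵀ S u*) ≥ μ · δ ≥ ε. -/
open Matrix

theorem tradeoff_of_isMinOn_add_mul {α : Type*} {s : Set α} {J P : α → ℝ} {μ : ℝ}
    (hμ : 0 ≤ μ) {a b : α} (ha : a ∈ s) (hb : IsMinOn (fun z => J z + μ * P z) s b)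
    (hPb : 0 ≤ P b) :
    μ * P a ≥ μ * (P a - P b) ∧ μ * (P a - P b) ≥ J b - J a := by
  have hba : J b + μ * P b ≤ J a + μ * P a := hb ha
  constructor
  · nlinarith [mul_nonneg hμ hPb]
  · linarith

theorem privacy_utility_tradeoff_general
    (n p : ℕ)
    (S : Matrix (Fin p) (Fin p) ℝ)
    (hS : S.PosSemidef)
    (μ : ℝ) (hμ : 0 ≤ μ)
    (J Jp : (Fin n → ℝ) → (Fin p → ℝ) → ℝ)
    (hJp : ∀ x u, Jp x u = J x u + μ * (u ⬝ᵥ (S *ᵥ u)))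
    (F : (Fin n → ℝ) → (Fin p → ℝ) → Prop)
    (xs : Fin n → ℝ) (us : Fin p → ℝ) (xp : Fin n → ℝ) (up : Fin p → ℝ)
    (hstarFeas : F xs us)
    (hpOpt : ∀ x u, F x u → Jp xp up ≤ Jp x u)
    (ε δ : ℝ)
    (hε : ε = J xp up - J xs us)
    (hδ : δ = us ⬝ᵥ (S *ᵥ us) - up ⬝ᵥ (S *ᵥ up)) :
    μ * (us ⬝ᵥ (S *ᵥ us)) ≥ μ * δ ∧ μ * δ ≥ ε := by
  have hpMin : IsMinOn (fun z => J z.1 z.2 + μ * (z.2 ⬝ᵥ (S *ᵥ z.2)))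
      {z | F z.1 z.2} (xp, up) := isMinOn_iff.mpr fun z hz => by
    simpa only [hJp] using hpOpt z.1 z.2 hz
  have hup : 0 ≤ up ⬝ᵥ (S *ᵥ up) := by
    simpa using hS.dotProduct_mulVec_nonneg up
  subst hε hδ
  exact tradeoff_of_isMinOn_add_mul (P := fun z => z.2 ⬝ᵥ (S *ᵥ z.2)) hμ
    (a := (xs, us)) hstarFeas hpMin hup

/-- **Theorem 3 (privacy–utility trade-off).**
If `(x*, u*)` minimizes the utility cost `J` over the steady-state feasible set `F` and
`(x_p, u_p)` minimizes the regularized cost `J_p = J + μ·uᵀSu` over `F`, then the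
nominal privacy gain `δ` is lower bounded by the utility loss `ε` and upper bounded by the
current privacy cost: `μ·(u*ᵀSu*) ≥ μ·δ ≥ ε`. -/
theorem privacy_utility_tradeoff
    (n p q : ℕ)
    (A : Matrix (Fin n) (Fin n) ℝ) (B : Matrix (Fin n) (Fin p) ℝ)
    (C₁ : Matrix (Fin q) (Fin n) ℝ) (r : Fin q → ℝ)
    (Q : Matrix (Fin n) (Fin n) ℝ) (R : Matrix (Fin p) (Fin p) ℝ)
    (S : Matrix (Fin p) (Fin p) ℝ)
    (hQ : Q.PosDef) (hR : R.PosDef) (hS : S.PosSemidef)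
    (μ : ℝ) (hμ : 0 ≤ μ)
    (J Jp : (Fin n → ℝ) → (Fin p → ℝ) → ℝ)
    (hJ : ∀ x u, J x u = x ⬝ᵥ (Q *ᵥ x) + u ⬝ᵥ (R *ᵥ u))
    (hJp : ∀ x u, Jp x u = J x u + μ * (u ⬝ᵥ (S *ᵥ u)))
    (F : (Fin n → ℝ) → (Fin p → ℝ) → Prop)
    (hF : ∀ x u, F x u ↔ (x = A *ᵥ x + B *ᵥ u ∧ C₁ *ᵥ x = r))
    (xs : Fin n → ℝ) (us : Fin p → ℝ) (xp : Fin n → ℝ) (up : Fin p → ℝ)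
    (hstarFeas : F xs us) (hstarOpt : ∀ x u, F x u → J xs us ≤ J x u)
    (hpFeas : F xp up) (hpOpt : ∀ x u, F x u → Jp xp up ≤ Jp x u)
    (ε δ : ℝ)
    (hε : ε = J xp up - J xs us)
    (hδ : δ = us ⬝ᵥ (S *ᵥ us) - up ⬝ᵥ (S *ᵥ up)) :
    μ * (us ⬝ᵥ (S *ᵥ us)) ≥ μ * δ ∧ μ * δ ≥ ε :=
  privacy_utility_tradeoff_general n p S hS μ hμ J Jp hJp F xs us xp up hstarFeas hpOpt ε δ hε hδ
end

section
/- (Guaranteed utility-loss bound via the choice of μ) Let F = {(x,u) ∈ ℝ^n × ℝ^p : x = A x + B u and C₁ x = r}, suppose (x*, u*) ∈ F minimizes J over F and (x_p, u_p) ∈ F minimizes J_p over F, and set ε = J(x_p, u_p) − J(x*, u*). If u*ᵀ S u* > 0, ε̄ ≥ 0, and μ = ε̄ / (u*ᵀ S u*), then ε ≤ ε̄; i.e., this choice of the regularization parameter guarantees that the utility cost increase is at most ε̄. -/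
open Matrix

/-!
Testing the regularized optimum `(x_p, u_p)` against the feasible point `(x*, u*)` gives
`J(x_p, u_p) + μ u_pᵀ S u_p ≤ J(x*, u*) + μ u*ᵀ S u*`. Since `S ⪰ 0` the term `μ u_pᵀ S u_p` is
nonnegative and can be dropped, so `ε ≤ μ u*ᵀ S u*`, which equals `ε̄` for the prescribed `μ`.
-/

theorem sub_le_mul_of_isMinOn_add_mul {α : Type*} {f g : α → ℝ} {s : Set α} {μ : ℝ} {x y : α}
    (hμ : 0 ≤ μ) (hgy : 0 ≤ g y) (hy : IsMinOn (fun z => f z + μ * g z) s y) (hx : x ∈ s) :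
    f y - f x ≤ μ * g x := by
  have hyx : f y + μ * g y ≤ f x + μ * g x := isMinOn_iff.mp hy x hx
  nlinarith [mul_nonneg hμ hgy]

theorem utility_loss_guarantee_general
    (n p : ℕ)
    (S : Matrix (Fin p) (Fin p) ℝ)
    (hS : S.PosSemidef)
    (μ : ℝ) (hμ : 0 ≤ μ)
    (J Jp : (Fin n → ℝ) → (Fin p → ℝ) → ℝ)
    (hJp : ∀ x u, Jp x u = J x u + μ * (u ⬝ᵥ (S *ᵥ u)))
    (F : (Fin n → ℝ) → (Fin p → ℝ) → Prop)
    (xs : Fin n → ℝ) (us : Fin p → ℝ) (xp : Fin n → ℝ) (up : Fin p → ℝ)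
    (hstarFeas : F xs us)
    (hpOpt : ∀ x u, F x u → Jp xp up ≤ Jp x u)
    (ε : ℝ)
    (hε : ε = J xp up - J xs us)
    (εbar : ℝ)
    (hSpos : 0 < us ⬝ᵥ (S *ᵥ us))
    (hμval : μ = εbar / (us ⬝ᵥ (S *ᵥ us))) :
    ε ≤ εbar := by
  have hquad : 0 ≤ up ⬝ᵥ (S *ᵥ up) := by simpa using hS.dotProduct_mulVec_nonneg up
  have hmin : IsMinOn (fun z => J z.1 z.2 + μ * (z.2 ⬝ᵥ (S *ᵥ z.2))) {z | F z.1 z.2} (xp, up) :=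
    isMinOn_iff.mpr fun z hz => by simpa only [hJp] using hpOpt z.1 z.2 hz
  calc ε = J xp up - J xs us := hε
    _ ≤ μ * (us ⬝ᵥ (S *ᵥ us)) :=
      sub_le_mul_of_isMinOn_add_mul (f := fun z => J z.1 z.2) (g := fun z => z.2 ⬝ᵥ (S *ᵥ z.2))
        (x := (xs, us)) hμ hquad hmin hstarFeas
    _ = εbar := by rw [hμval, div_mul_cancel₀ _ hSpos.ne']

/-- **Guaranteed utility-loss bound via the choice of μ.**
If `u*ᵀSu* > 0`, `ε̄ ≥ 0` and `μ = ε̄ / (u*ᵀSu*)`, then the utility cost increase `ε`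
incurred by the privacy-regularized optimum is at most `ε̄`. -/
theorem utility_loss_guarantee
    (n p q : ℕ)
    (A : Matrix (Fin n) (Fin n) ℝ) (B : Matrix (Fin n) (Fin p) ℝ)
    (C₁ : Matrix (Fin q) (Fin n) ℝ) (r : Fin q → ℝ)
    (Q : Matrix (Fin n) (Fin n) ℝ) (R : Matrix (Fin p) (Fin p) ℝ)
    (S : Matrix (Fin p) (Fin p) ℝ)
    (hQ : Q.PosDef) (hR : R.PosDef) (hS : S.PosSemidef)
    (μ : ℝ) (hμ : 0 ≤ μ)
    (J Jp : (Fin n → ℝ) → (Fin p → ℝ) → ℝ)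
    (hJ : ∀ x u, J x u = x ⬝ᵥ (Q *ᵥ x) + u ⬝ᵥ (R *ᵥ u))
    (hJp : ∀ x u, Jp x u = J x u + μ * (u ⬝ᵥ (S *ᵥ u)))
    (F : (Fin n → ℝ) → (Fin p → ℝ) → Prop)
    (hF : ∀ x u, F x u ↔ (x = A *ᵥ x + B *ᵥ u ∧ C₁ *ᵥ x = r))
    (xs : Fin n → ℝ) (us : Fin p → ℝ) (xp : Fin n → ℝ) (up : Fin p → ℝ)
    (hstarFeas : F xs us) (hstarOpt : ∀ x u, F x u → J xs us ≤ J x u)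
    (hpFeas : F xp up) (hpOpt : ∀ x u, F x u → Jp xp up ≤ Jp x u)
    (ε δ : ℝ)
    (hε : ε = J xp up - J xs us)
    (hδ : δ = us ⬝ᵥ (S *ᵥ us) - up ⬝ᵥ (S *ᵥ up))
    (εbar : ℝ) (hεbar : 0 ≤ εbar)
    (hSpos : 0 < us ⬝ᵥ (S *ᵥ us))
    (hμval : μ = εbar / (us ⬝ᵥ (S *ᵥ us))) :
    ε ≤ εbar :=
  utility_loss_guarantee_general n p S hS μ hμ J Jp hJp F xs us xp up hstarFeas hpOpt ε hε εbar
    hSpos hμval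
end

section
/- (Ordering of the forward and backward information terms, from the proof of Theorem 1) Let Σe ∈ ℝ^{m×m} be symmetric positive definite and let k̂, τ, N be integers with 1 ≤ τ ≤ k̂ ≤ N. For u ∈ ℝ^p define q(u) = Σ_{k=k̂+1}^{N} (Σ_{l=k̂}^{min(k̂+τ−1, k−1)} C A^{k−1−l} B u)ᵀ Σe⁻¹ (Σ_{l=k̂}^{min(k̂+τ−1, k−1)} C A^{k−1−l} B u) and q⁻(u) = Σ_{k=k̂−τ+1}^{N} (Σ_{l=k̂−τ}^{min(k̂−1, k−1)} C A^{k−1−l} B u)ᵀ Σe⁻¹ (Σ_{l=k̂−τ}^{min(k̂−1, k−1)} C A^{k−1−l} B u). Then q(u) ≤ q⁻(u) for every u ∈ ℝ^p; i.e., uᵀ𝒮(τ)u ≤ uᵀ𝒮₋(−τ)u, so the hypothesis lags τ ≤ −1 can be ignored when maximizing the Chapman–Robbins bound. -/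
open Matrix Finset

lemma fbio_nonneg {m : ℕ} {σe : Matrix (Fin m) (Fin m) ℝ} (hσe : σe.PosDef)
    (x : Fin m → ℝ) : 0 ≤ x ⬝ᵥ (σe⁻¹ *ᵥ x) := by
  have h := hσe.inv.posSemidef.re_dotProduct_nonneg x
  simpa using h

/-- **Ordering of the forward and backward information terms** (from the proof of Theorem 1).
For `1 ≤ τ ≤ k̂ ≤ N`, the quadratic form `q(u) = uᵀ𝒮(τ)u` obtained by hypothesizing the
change time `k̂ + τ` is dominated by the quadratic form `q⁻(u) = uᵀ𝒮₋(−τ)u` obtained by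
hypothesizing the change time `k̂ − τ`: `q(u) ≤ q⁻(u)` for every `u`, so the negative lags
can be ignored when maximizing the Chapman–Robbins bound. -/
theorem forward_backward_information_ordering
    (n m p N khat τ : ℕ) (hτ1 : 1 ≤ τ) (hτk : τ ≤ khat) (hkN : khat ≤ N)
    (A : Matrix (Fin n) (Fin n) ℝ) (B : Matrix (Fin n) (Fin p) ℝ)
    (C : Matrix (Fin m) (Fin n) ℝ)
    (σe : Matrix (Fin m) (Fin m) ℝ) (hσe : σe.PosDef)
    (q qminus : (Fin p → ℝ) → ℝ)
    (hq : ∀ u, q u = ∑ k ∈ Finset.Icc (khat + 1) N,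
      (∑ l ∈ Finset.Icc khat (min (khat + τ - 1) (k - 1)), (C * A ^ (k - 1 - l) * B) *ᵥ u) ⬝ᵥ
        (σe⁻¹ *ᵥ
          (∑ l ∈ Finset.Icc khat (min (khat + τ - 1) (k - 1)), (C * A ^ (k - 1 - l) * B) *ᵥ u)))
    (hqminus : ∀ u, qminus u = ∑ k ∈ Finset.Icc (khat - τ + 1) N,
      (∑ l ∈ Finset.Icc (khat - τ) (min (khat - 1) (k - 1)), (C * A ^ (k - 1 - l) * B) *ᵥ u) ⬝ᵥ
        (σe⁻¹ *ᵥ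
          (∑ l ∈ Finset.Icc (khat - τ) (min (khat - 1) (k - 1)), (C * A ^ (k - 1 - l) * B) *ᵥ u))) :
    ∀ u : Fin p → ℝ, q u ≤ qminus u := by
  intro u
  rw [hq u, hqminus u]
  set g : ℕ → ℝ := fun k =>
      (∑ l ∈ Finset.Icc (khat - τ) (min (khat - 1) (k - 1)), (C * A ^ (k - 1 - l) * B) *ᵥ u) ⬝ᵥ
        (σe⁻¹ *ᵥ
          (∑ l ∈ Finset.Icc (khat - τ) (min (khat - 1) (k - 1)), (C * A ^ (k - 1 - l) * B) *ᵥ u))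
    with hg
  have key : ∑ k ∈ Finset.Icc (khat + 1) N,
      (∑ l ∈ Finset.Icc khat (min (khat + τ - 1) (k - 1)), (C * A ^ (k - 1 - l) * B) *ᵥ u) ⬝ᵥ
        (σe⁻¹ *ᵥ
          (∑ l ∈ Finset.Icc khat (min (khat + τ - 1) (k - 1)), (C * A ^ (k - 1 - l) * B) *ᵥ u))
      = ∑ k ∈ Finset.Icc (khat - τ + 1) (N - τ), g k := by
    have hIcc : Finset.Icc (khat + 1) N
        = (Finset.Icc (khat - τ + 1) (N - τ)).map (addRightEmbedding τ) := by
      rw [map_add_right_Icc]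
      congr 1 <;> omega
    rw [hIcc, Finset.sum_map]
    refine Finset.sum_congr rfl fun k hk => ?_
    simp only [Finset.mem_Icc] at hk
    simp only [addRightEmbedding_apply, hg]
    have hk1 : 1 ≤ k := by omega
    have hIccl : Finset.Icc khat (min (khat + τ - 1) (k + τ - 1))
        = (Finset.Icc (khat - τ) (min (khat - 1) (k - 1))).map (addRightEmbedding τ) := by
      rw [map_add_right_Icc]
      congr 1
      · omega
      · omega
    rw [hIccl, Finset.sum_map]
    have hsum : ∀ l ∈ Finset.Icc (khat - τ) (min (khat - 1) (k - 1)),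
        (C * A ^ (k + τ - 1 - addRightEmbedding τ l) * B) *ᵥ u
          = (C * A ^ (k - 1 - l) * B) *ᵥ u := by
      intro l hl
      simp only [addRightEmbedding_apply]
      simp only [Finset.mem_Icc] at hl
      have he : k + τ - 1 - (l + τ) = k - 1 - l := by omega
      rw [he]
    rw [Finset.sum_congr rfl hsum]
  rw [key]
  refine Finset.sum_le_sum_of_subset_of_nonneg ?_ fun k _ _ => fbio_nonneg hσe _
  exact Finset.Icc_subset_Icc_right (by omega)
end
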